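/- arXiv:1412.7704 — 7 statements merged into one kernel-verified Lean document; each statement's English description precedes it below -/
import Mathlib

section
/- Let A be a commutative unital complex Banach algebra, let (φ_n)_{n∈ℕ} be a sequence of pairwise distinct characters on A such that the closure in the character space of A (with the Gelfand topology) of the set {φ_1, φ_2, …} has no perfect subsets, and let (λ_n)_{n∈ℕ} be a sequence of complex numbers with ∑_{n=1}^∞ |λ_n| < ∞. If for every a ∈ A one has ∑_{n=1}^∞ λ_n φ_n(a) = 0, then λ_n = 0 for all n. -/
/-!
Suppose some `l n ≠ 0`. The closure `F` of `{φ n | l n ≠ 0}` contains no perfect set, so it has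
an isolated point, which must be some `φ m` with `l m ≠ 0`. The key fact is that a closed set `K`
without perfect subsets is `A`-convex: for `χ₀ ∉ K` there is `b` with `χ₀ b = 1` and `‖χ b‖ < 1`
on `K`. This goes by Cantor–Bendixson induction. If `b` works on the derived set of `K`, then it
is below some `r < 1` there, only finitely many (isolated) points of `K` have `‖χ b‖ ≥ r`, and
`b ^ N * c` works on `K` for `c` vanishing at those points and `N` large; at limit stages a
single `b` works for some member of the chain by compactness of the character space.
Taking `K = F \ {φ m}` and `χ₀ = φ m`, dominated convergence in `∑ l n (φ n b) ^ N = 0`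
as `N → ∞` gives `l m = 0`.
-/

open WeakDual

open Filter Topology Set

section Topology

variable {X : Type*} [TopologicalSpace X]

theorem IsCompact.exists_mem_Ioo_forall_lt {K : Set X} (hK : IsCompact K) {f : X → ℝ}
    (hf : ContinuousOn f K) {a b : ℝ} (hba : b < a) (h : ∀ x ∈ K, f x < a) :
    ∃ r ∈ Ioo b a, ∀ x ∈ K, f x < r := by
  rcases K.eq_empty_or_nonempty with rfl | hne
  · exact ⟨(a + b) / 2, ⟨by linarith, by linarith⟩, by simp⟩
  · obtain ⟨x, hx, hmax⟩ := hK.exists_isMaxOn hne hf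
    have hxa := h x hx
    refine ⟨(max (f x) b + a) / 2, ⟨by grind, by grind⟩, fun y hy => ?_⟩
    have : f y ≤ f x := hmax hy
    grind

theorem IsCompact.finite_of_disjoint_derivedSet {T K : Set X} (hT : IsCompact T) (hTK : T ⊆ K)
    (hdisj : Disjoint T (derivedSet K)) : T.Finite := by
  by_contra hinf
  obtain ⟨x, hxT, hx⟩ := Set.Infinite.exists_accPt_of_subset_isCompact hinf hT subset_rfl
  exact hdisj.notMem_of_mem_left hxT (hx.mono (principal_mono.2 hTK))

theorem IsClosed.diff_singleton_of_notMem_derivedSet {F : Set X} (hF : IsClosed F) {x : X}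
    (hx : x ∉ derivedSet F) : IsClosed (F \ {x}) := by
  rw [isClosed_iff_derivedSet_subset] at hF ⊢
  intro y hy
  have hyF : y ∈ derivedSet F := derivedSet_mono _ _ sdiff_subset hy
  exact ⟨hF hyF, fun hyx => hx (hyx ▸ hyF)⟩

theorem IsClosed.induction_of_perfect_eq_empty [T1Space X] {p : Set X → Prop} (hempty : p ∅)
    (hderived : ∀ K, IsClosed K → p (derivedSet K) → p K)
    (hsInter : ∀ c : Set (Set X), c.Nonempty → IsChain (· ⊆ ·) c → (∀ S ∈ c, IsClosed S) →
      p (⋂₀ c) → ∃ S ∈ c, p S)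
    {K : Set X} (hK : IsClosed K) (hperf : ∀ P ⊆ K, Perfect P → P = ∅) : p K := by
  by_contra hpK
  obtain ⟨m, -, hmin⟩ := zorn_superset_nonempty {S | IsClosed S ∧ S ⊆ K ∧ ¬ p S}
    (fun c hc hchain hne => ⟨⋂₀ c,
      ⟨isClosed_sInter fun S hS => (hc hS).1,
        (sInter_subset_of_mem hne.some_mem).trans (hc hne.some_mem).2.1,
        fun h => by
          obtain ⟨S, hS, hpS⟩ := hsInter c hne hchain (fun S hS => (hc hS).1) h
          exact (hc hS).2.2 hpS⟩,
      fun S hS => sInter_subset_of_mem hS⟩) K ⟨hK, subset_rfl, hpK⟩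
  obtain ⟨hm, hmK, hpm⟩ := hmin.prop
  have hderm : derivedSet m ⊆ m := (isClosed_iff_derivedSet_subset m).1 hm
  have hm_sub : m ⊆ derivedSet m :=
    hmin.2 ⟨isClosed_derivedSet m, hderm.trans hmK, fun h => hpm (hderived m hm h)⟩ hderm
  exact hpm (hperf m hmK ⟨hm, hm_sub⟩ ▸ hempty)

end Topology

theorem eq_zero_of_tsum_mul_pow_eq_zero {ι 𝕜 : Type*} [NormedField 𝕜] [CompleteSpace 𝕜]
    {l z : ι → 𝕜} (hl : Summable (‖l ·‖)) {m : ι} (hm : z m = 1)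
    (hz : ∀ n ≠ m, l n ≠ 0 → ‖z n‖ < 1) (h : ∀ N : ℕ, ∑' n, l n * z n ^ N = 0) : l m = 0 := by
  classical
  have hlim : Tendsto (fun N : ℕ => ∑' n, l n * z n ^ N) atTop
      (𝓝 (∑' n, if n = m then l m else 0)) := by
    refine tendsto_tsum_of_dominated_convergence hl (fun n => ?_) (Eventually.of_forall
      fun N n => ?_)
    · by_cases hnm : n = m
      · simp [hnm, hm]
      by_cases hn : l n = 0
      · simp [hn, hnm]
      simpa [hnm] using
        (tendsto_pow_atTop_nhds_zero_of_norm_lt_one (hz n hnm hn)).const_mul (l n)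
    · by_cases hnm : n = m
      · simp [hnm, hm]
      by_cases hn : l n = 0
      · simp [hn]
      rw [norm_mul, norm_pow]
      exact mul_le_of_le_one_right (norm_nonneg _) (pow_le_one₀ (norm_nonneg _) (hz n hnm hn).le)
  simp only [h, tsum_ite_eq] at hlim
  exact (tendsto_nhds_unique tendsto_const_nhds hlim).symm

namespace WeakDual.CharacterSpace

section Separation

variable {𝕜 A : Type*} [Field 𝕜] [TopologicalSpace 𝕜] [ContinuousAdd 𝕜]
  [ContinuousConstSMul 𝕜 𝕜] [CommRing A] [TopologicalSpace A] [Algebra 𝕜 A]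

theorem exists_apply_eq_one_apply_eq_zero {χ ψ : characterSpace 𝕜 A} (h : ψ ≠ χ) :
    ∃ c : A, χ c = 1 ∧ ψ c = 0 := by
  obtain ⟨x, hx⟩ : ∃ x : A, χ x ≠ ψ x := by
    by_contra! hx
    exact h (ext fun x => (hx x).symm)
  refine ⟨(χ x - ψ x)⁻¹ • (x - algebraMap 𝕜 A (ψ x)), ?_, ?_⟩
  · simp [AlgHomClass.commutes, inv_mul_cancel₀ (sub_ne_zero.2 hx)]
  · simp [AlgHomClass.commutes]

theorem exists_apply_eq_one_forall_apply_eq_zero (χ : characterSpace 𝕜 A)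
    {T : Set (characterSpace 𝕜 A)} (hT : T.Finite) (hχ : χ ∉ T) :
    ∃ c : A, χ c = 1 ∧ ∀ ψ ∈ T, ψ c = 0 := by
  choose c hc₁ hc₀ using fun ψ : T =>
    exists_apply_eq_one_apply_eq_zero (χ := χ) (ψ := ψ) fun h => hχ (h ▸ ψ.2)
  have := hT.fintype
  refine ⟨∏ ψ, c ψ, by simp [hc₁], fun ψ hψ => ?_⟩
  rw [map_prod]
  exact Finset.prod_eq_zero (Finset.mem_univ ⟨ψ, hψ⟩) (hc₀ ⟨ψ, hψ⟩)

end Separation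

variable {𝕜 A : Type*} [NontriviallyNormedField 𝕜] [NormedCommRing A] [NormedAlgebra 𝕜 A]

/-- For compact `K`, this says that `χ₀` lies outside the `A`-convex hull
`{χ | ∀ a, ‖χ a‖ ≤ ⨆ ψ ∈ K, ‖ψ a‖}` of `K`. -/
def NotMemHull (χ₀ : characterSpace 𝕜 A) (K : Set (characterSpace 𝕜 A)) : Prop :=
  ∃ b : A, χ₀ b = 1 ∧ ∀ χ ∈ K, ‖χ b‖ < 1

theorem continuous_norm_apply (b : A) : Continuous fun χ : characterSpace 𝕜 A => ‖χ b‖ :=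
  ((eval_continuous b).comp continuous_subtype_val).norm

theorem norm_apply_le [CompleteSpace A] (χ : characterSpace 𝕜 A) (a : A) :
    ‖χ a‖ ≤ ‖a‖ * ‖(1 : A)‖ :=
  spectrum.norm_le_norm_mul_of_mem (apply_mem_spectrum χ a)

variable [CompleteSpace A] [ProperSpace 𝕜] {χ₀ : characterSpace 𝕜 A}

theorem NotMemHull.of_derivedSet {K : Set (characterSpace 𝕜 A)} (hK : IsClosed K) (h₀ : χ₀ ∉ K)
    (h : NotMemHull χ₀ (derivedSet K)) : NotMemHull χ₀ K := by
  obtain ⟨b, hb₁, hb⟩ := h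
  obtain ⟨r, ⟨hr₀, hr₁⟩, hr⟩ := (isClosed_derivedSet K).isCompact.exists_mem_Ioo_forall_lt
    (continuous_norm_apply b).continuousOn zero_lt_one hb
  set T := {χ ∈ K | r ≤ ‖χ b‖}
  -- the points where `b` is still large are isolated in `K`, hence finitely many
  have hT : T.Finite :=
    (hK.inter (isClosed_le continuous_const (continuous_norm_apply b))).isCompact
      |>.finite_of_disjoint_derivedSet (fun χ hχ => hχ.1)
      (Set.disjoint_left.2 fun χ hχ hχK => (hr χ hχK).not_ge hχ.2)
  obtain ⟨c, hc₁, hc₀⟩ := exists_apply_eq_one_forall_apply_eq_zero χ₀ hT fun h => h₀ h.1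
  obtain ⟨N, hN⟩ : ∃ N : ℕ, r ^ N * (‖c‖ * ‖(1 : A)‖) < 1 :=
    (((tendsto_pow_atTop_nhds_zero_of_lt_one hr₀.le hr₁).mul_const _).eventually
      (gt_mem_nhds (by simp))).exists
  refine ⟨b ^ N * c, by simp [hb₁, hc₁], fun χ hχ => ?_⟩
  by_cases hχT : χ ∈ T
  · simp [hc₀ χ hχT]
  have hχb : ‖χ b‖ < r := not_le.1 fun h => hχT ⟨hχ, h⟩
  calc ‖χ (b ^ N * c)‖ = ‖χ b‖ ^ N * ‖χ c‖ := by simp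
    _ ≤ r ^ N * (‖c‖ * ‖(1 : A)‖) :=
      mul_le_mul (pow_le_pow_left₀ (norm_nonneg _) hχb.le N) (norm_apply_le χ c)
        (norm_nonneg _) (by positivity)
    _ < 1 := hN

theorem exists_notMemHull_of_sInter {c : Set (Set (characterSpace 𝕜 A))} (hne : c.Nonempty)
    (hchain : IsChain (· ⊆ ·) c) (hclosed : ∀ S ∈ c, IsClosed S)
    (h : NotMemHull χ₀ (⋂₀ c)) : ∃ S ∈ c, NotMemHull χ₀ S := by
  obtain ⟨b, hb₁, hb⟩ := h
  have : Nonempty c := hne.to_subtype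
  obtain ⟨S, hS⟩ := exists_subset_nhds_of_compactSpace (V := fun S : c => (S : Set _))
    (fun S T => (hchain.total S.2 T.2).elim (fun h => ⟨S, subset_rfl, h⟩)
      fun h => ⟨T, h, subset_rfl⟩) (fun S => hclosed S S.2)
    (U := {χ | ‖χ b‖ < 1}) fun χ hχ =>
      (isOpen_lt (continuous_norm_apply b) continuous_const).mem_nhds
        (hb χ (by simpa [Set.sInter_eq_iInter] using hχ))
  exact ⟨S, S.2, b, hb₁, hS⟩

theorem notMemHull_of_perfect_eq_empty {K : Set (characterSpace 𝕜 A)} (hK : IsClosed K)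
    (hperf : ∀ P ⊆ K, Perfect P → P = ∅) (h₀ : χ₀ ∉ K) : NotMemHull χ₀ K := by
  refine hK.induction_of_perfect_eq_empty (p := fun K => χ₀ ∉ K → NotMemHull χ₀ K)
    (fun _ => ⟨1, map_one χ₀, by simp⟩)
    (fun K hK hder h₀ => .of_derivedSet hK h₀
      (hder fun h => h₀ ((isClosed_iff_derivedSet_subset K).1 hK h)))
    (fun c hne hchain hclosed h => ?_) hperf h₀
  by_cases hc : χ₀ ∈ ⋂₀ c
  · exact ⟨hne.some, hne.some_mem, fun h => (h (hc _ hne.some_mem)).elim⟩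
  · obtain ⟨S, hS, hsep⟩ := exists_notMemHull_of_sInter hne hchain hclosed (h hc)
    exact ⟨S, hS, fun _ => hsep⟩

end WeakDual.CharacterSpace

/-- If `A` is a commutative unital complex Banach algebra, `(φ n)` a sequence of pairwise
distinct characters on `A` whose closure in the character space has no (nonempty) perfect
subsets, and `(l n)` is absolutely summable with `∑' n, l n * φ n a = 0` for all `a`, then
all `l n` vanish. -/
theorem countable_lin_comb_characters_eq_zero_of_no_perfect_subsets
    {A : Type*} [NormedCommRing A] [NormedAlgebra ℂ A] [CompleteSpace A]
    (φ : ℕ → characterSpace ℂ A) (hφ : Function.Injective φ)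
    (hperf : ∀ P : Set (characterSpace ℂ A), P ⊆ closure (Set.range φ) → Perfect P → P = ∅)
    (l : ℕ → ℂ) (hl : Summable fun n => ‖l n‖)
    (hzero : ∀ a : A, ∑' n, l n * φ n a = 0) :
    ∀ n, l n = 0 := by
  by_contra! ⟨n₀, hn₀⟩
  set D := φ '' {n | l n ≠ 0}
  have hDφ : closure D ⊆ closure (Set.range φ) := closure_mono (image_subset_range _ _)
  obtain ⟨x, hxD, hx⟩ : ∃ x ∈ closure D, x ∉ derivedSet (closure D) := by
    by_contra! h
    have hempty := hperf _ hDφ ⟨isClosed_closure, h⟩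
    exact hempty.subset (subset_closure (mem_image_of_mem φ hn₀))
  obtain ⟨m, hm, rfl⟩ : x ∈ D := ((closure_eq_self_union_derivedSet D ▸ hxD).resolve_right
    fun h => hx (derivedSet_mono _ _ subset_closure h))
  obtain ⟨b, hb₁, hb⟩ := CharacterSpace.notMemHull_of_perfect_eq_empty
    (isClosed_closure.diff_singleton_of_notMem_derivedSet hx)
    (fun P hP => hperf P (hP.trans (sdiff_subset.trans hDφ))) (fun h => h.2 rfl)
  exact hm (eq_zero_of_tsum_mul_pow_eq_zero hl hb₁
    (fun n hnm hn => hb _ ⟨subset_closure ⟨n, hn, rfl⟩, hφ.ne hnm⟩)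
    fun N => by simpa using hzero (b ^ N))
end

section
/- Let A be a commutative unital complex Banach algebra, let (φ_n)_{n∈ℕ} be a sequence of pairwise distinct characters on A such that the set {φ_1, φ_2, …} is a compact subset of the character space of A (with the Gelfand topology), and let (λ_n)_{n∈ℕ} be a sequence of complex numbers with ∑_{n=1}^∞ |λ_n| < ∞. If for every a ∈ A one has ∑_{n=1}^∞ λ_n φ_n(a) = 0, then λ_n = 0 for all n. -/
/-!
For `a, b ∈ A` the Cauchy transform `w ↦ ∑ lₙ φₙ(b) / (w - φₙ(a))` equals
`∑ lₙ φₙ(b (w - a)⁻¹) = 0` off the spectrum of `a`. It is holomorphic off the countable compact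
set `{φₙ(a)}`, whose complement is connected, so it vanishes there identically. Integrating it
over a circle missing every `φₙ(a)` shows that the coefficients `lₙ` with `φₙ(a)` inside the
circle again form a null combination. Choosing radii that avoid the countably many values
`|φₙ(a) - χ(a)|`, such restrictions cut out a neighbourhood basis of every character `χ`.
Now the closure of `{φₙ | lₙ ≠ 0}` is countable and compact, so by Baire it has an isolated
point `φₘ`; restricting to a neighbourhood isolating it leaves the single coefficient `lₘ`,
which must then vanish.
-/

open WeakDual

open Set Metric Filter Topology Complex Real

theorem IsCompact.exists_isOpen_inter_eq_singleton {X : Type*} [TopologicalSpace X] [T2Space X]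
    {C : Set X} (hC : IsCompact C) (hct : C.Countable) (hne : C.Nonempty) :
    ∃ x ∈ C, ∃ U, IsOpen U ∧ U ∩ C = {x} := by
  have : CompactSpace C := isCompact_iff_compactSpace.1 hC
  have : Countable C := hct.to_subtype
  have : Nonempty C := hne.to_subtype
  obtain ⟨x, hx⟩ : ∃ x : C, (interior {x}).Nonempty :=
    nonempty_interior_of_iUnion_of_closed (fun _ => isClosed_singleton) (iUnion_of_singleton C)
  have hx_open : IsOpen ({x} : Set C) :=
    hx.subset_singleton_iff.1 interior_subset ▸ isOpen_interior
  obtain ⟨U, hU, hUx⟩ := isOpen_induced_iff.1 hx_open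
  refine ⟨x, x.2, U, hU, ?_⟩
  rw [inter_comm, ← Subtype.image_preimage_coe, hUx, image_singleton]

theorem IsCompact.exists_isOpen_inter_eq_singleton_of_subset {X : Type*} [TopologicalSpace X]
    [T2Space X] {K S : Set X} (hK : IsCompact K) (hct : K.Countable) (hSK : S ⊆ K)
    (hne : S.Nonempty) : ∃ x ∈ S, ∃ U, IsOpen U ∧ U ∩ S = {x} := by
  have hSK' : closure S ⊆ K := closure_minimal hSK hK.isClosed
  obtain ⟨x, hxS, U, hU, hUx⟩ := (hK.of_isClosed_subset isClosed_closure hSK')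
    |>.exists_isOpen_inter_eq_singleton (hct.mono hSK') hne.closure
  obtain ⟨y, hyU, hyS⟩ := mem_closure_iff.1 hxS U hU (hUx.symm.subset rfl).1
  obtain rfl : y = x := hUx.subset ⟨hyU, subset_closure hyS⟩
  refine ⟨y, hyS, U, hU, subset_antisymm ?_ (singleton_subset_iff.2 ⟨hyU, hyS⟩)⟩
  exact hUx ▸ inter_subset_inter_right U subset_closure

theorem hasSum_circleIntegral_of_norm_le {ι : Type*} [Countable ι] {f : ι → ℂ → ℂ} {u : ι → ℝ}
    {c : ℂ} {R : ℝ} (hR : 0 ≤ R) (hu : Summable u) (hf : ∀ i, ContinuousOn (f i) (sphere c R))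
    (hle : ∀ i, ∀ w ∈ sphere c R, ‖f i w‖ ≤ u i) :
    HasSum (fun i => ∮ w in C(c, R), f i w) (∮ w in C(c, R), ∑' i, f i w) := by
  have h := (tendstoUniformlyOn_tsum hu hle).tendsto_circleIntegral_of_continuousOn hR
    (Eventually.of_forall fun s => continuousOn_finsetSum s fun i _ => hf i)
  exact h.congr fun s => circleIntegral.integral_fun_sum fun i _ => (hf i).circleIntegrable hR

theorem circleIntegral_sub_inv_of_notMem_closedBall {c z : ℂ} {R : ℝ} (hR : 0 ≤ R)
    (hz : z ∉ closedBall c R) : ∮ w in C(c, R), (w - z)⁻¹ = 0 := by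
  refine DiffContOnCl.circleIntegral_eq_zero hR (DifferentiableOn.diffContOnCl ?_)
  exact (differentiableOn_id.sub_const z).inv fun w hw =>
    sub_ne_zero.2 (ne_of_mem_of_not_mem (closure_ball_subset_closedBall hw) hz)

theorem norm_mul_inv_sub_le {c w z : ℂ} {δ : ℝ} (hδ : 0 < δ) (h : δ ≤ dist w z) :
    ‖c * (w - z)⁻¹‖ ≤ ‖c‖ / δ := by
  rw [norm_mul, norm_inv, ← dist_eq_norm, div_eq_mul_inv]
  gcongr

noncomputable def cauchyTransform {ι : Type*} (c z : ι → ℂ) (w : ℂ) : ℂ :=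
  ∑' i, c i * (w - z i)⁻¹

section CauchyTransform

variable {ι : Type*} {c z : ι → ℂ}

theorem differentiableOn_cauchyTransform (hc : Summable (‖c ·‖)) :
    DifferentiableOn ℂ (cauchyTransform c z) (closure (range z))ᶜ := by
  intro w₀ hw₀
  obtain ⟨ε, hε, hball⟩ := Metric.isOpen_iff.1 isClosed_closure.isOpen_compl w₀ hw₀
  have hdist : ∀ i, ∀ w ∈ ball w₀ (ε / 2), ε / 2 ≤ dist w (z i) := by
    intro i w hw
    by_contra! h
    refine hball ?_ (subset_closure (mem_range_self i))
    rw [mem_ball] at hw ⊢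
    linarith [dist_triangle (z i) w w₀, dist_comm w (z i)]
  refine (DifferentiableOn.differentiableAt ?_
    (ball_mem_nhds w₀ (half_pos hε))).differentiableWithinAt
  refine differentiableOn_tsum_of_summable_norm (hc.div_const (ε / 2)) (fun i w hw => ?_)
    isOpen_ball (fun i w hw => norm_mul_inv_sub_le (half_pos hε) (hdist i w hw))
  have hne : w - z i ≠ 0 := sub_ne_zero.2 (dist_pos.1 ((half_pos hε).trans_le (hdist i w hw)))
  exact (((differentiableAt_id.sub_const (z i)).inv hne).const_mul (c i)).differentiableWithinAt

theorem eqOn_zero_cauchyTransform [Countable ι] (hc : Summable (‖c ·‖))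
    (hz : IsCompact (range z)) (h_cocompact : ∀ᶠ w in cocompact ℂ, cauchyTransform c z w = 0) :
    EqOn (cauchyTransform c z) 0 (range z)ᶜ := by
  obtain ⟨K, hK, hKzero⟩ := mem_cocompact.1 h_cocompact
  obtain ⟨w₁, hw₁⟩ := (ne_univ_iff_exists_notMem _).1 (hK.union hz).ne_univ
  rw [mem_union, not_or] at hw₁
  have hconn : IsPreconnected (range z)ᶜ :=
    ((countable_range z).isConnected_compl_of_one_lt_rank (by simp)).isPreconnected
  have hanalytic := (hz.isClosed.closure_eq ▸ differentiableOn_cauchyTransform hc).analyticOnNhd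
    hz.isClosed.isOpen_compl
  exact hanalytic.eqOn_zero_of_preconnected_of_eventuallyEq_zero hconn hw₁.2
    (eventually_of_mem (hK.isClosed.isOpen_compl.mem_nhds hw₁.1) hKzero)

variable [Countable ι] {w₀ : ℂ} {R : ℝ}

theorem circleIntegral_cauchyTransform (hc : Summable (‖c ·‖)) (hz : IsClosed (range z))
    (hR : 0 < R) (hsph : ∀ i, z i ∉ sphere w₀ R) :
    ∮ w in C(w₀, R), cauchyTransform c z w =
      2 * π * I * ∑' i, {i | z i ∈ ball w₀ R}.indicator c i := by
  obtain ⟨δ, hδ, hthick⟩ := (isCompact_sphere w₀ R).exists_thickening_subset_open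
    hz.isOpen_compl fun w hw ⟨i, hi⟩ => hsph i (hi ▸ hw)
  have hdist : ∀ i, ∀ w ∈ sphere w₀ R, δ ≤ dist w (z i) := fun i w hw => not_lt.1 fun h =>
    hthick (mem_thickening_iff.2 ⟨w, hw, by rwa [dist_comm]⟩) (mem_range_self i)
  have hcont : ∀ i, ContinuousOn (fun w => c i * (w - z i)⁻¹) (sphere w₀ R) := fun i =>
    continuousOn_const.mul <| (continuousOn_id.sub continuousOn_const).inv₀ fun w hw =>
      sub_ne_zero.2 (dist_pos.1 (hδ.trans_le (hdist i w hw)))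
  have hterm : ∀ i, ∮ w in C(w₀, R), c i * (w - z i)⁻¹ =
      2 * π * I * {i | z i ∈ ball w₀ R}.indicator c i := by
    intro i
    rw [circleIntegral.integral_const_mul]
    by_cases hi : z i ∈ ball w₀ R
    · rw [circleIntegral.integral_sub_inv_of_mem_ball hi,
        indicator_of_mem (show i ∈ {i | z i ∈ ball w₀ R} from hi), mul_comm]
    · rw [circleIntegral_sub_inv_of_notMem_closedBall hR.le
        fun h => hi (lt_of_le_of_ne h (hsph i)),
        indicator_of_notMem (show i ∉ {i | z i ∈ ball w₀ R} from hi), mul_zero, mul_zero]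
  rw [← tsum_mul_left, ← funext hterm]
  exact (hasSum_circleIntegral_of_norm_le hR.le (hc.div_const δ) hcont
    fun i w hw => norm_mul_inv_sub_le hδ (hdist i w hw)).tsum_eq.symm

theorem tsum_indicator_eq_zero_of_cauchyTransform (hc : Summable (‖c ·‖))
    (hz : IsCompact (range z)) (h_cocompact : ∀ᶠ w in cocompact ℂ, cauchyTransform c z w = 0)
    (hR : 0 < R) (hsph : ∀ i, z i ∉ sphere w₀ R) :
    ∑' i, {i | z i ∈ ball w₀ R}.indicator c i = 0 := by
  have hzero : ∮ w in C(w₀, R), cauchyTransform c z w = 0 := by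
    rw [circleIntegral.integral_congr hR.le fun w hw => eqOn_zero_cauchyTransform hc hz
      h_cocompact fun ⟨i, hi⟩ => hsph i (hi ▸ hw)]
    simp [circleIntegral]
  rw [circleIntegral_cauchyTransform hc hz.isClosed hR hsph] at hzero
  exact (mul_eq_zero.1 hzero).resolve_left two_pi_I_ne_zero

end CauchyTransform

namespace WeakDual.CharacterSpace

variable {A : Type*} [NormedCommRing A] [NormedAlgebra ℂ A]

theorem apply_resolvent (χ : characterSpace ℂ A) {a : A} {w : ℂ} (hw : w ∉ spectrum ℂ a) :
    χ (resolvent a w) = (w - χ a)⁻¹ := by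
  rw [spectrum.resolvent_eq (spectrum.notMem_iff.1 hw), map_units_inv, IsUnit.unit_spec,
    map_sub, AlgHomClass.commutes, Algebra.algebraMap_self_apply]

theorem continuous_eval (a : A) : Continuous fun χ : characterSpace ℂ A => χ a :=
  (WeakDual.eval_continuous a).comp continuous_subtype_val

end WeakDual.CharacterSpace

section NullCombination

variable {ι : Type*} {A : Type*} [NormedCommRing A] [NormedAlgebra ℂ A]

def IsNullCombination (φ : ι → characterSpace ℂ A) (l : ι → ℂ) : Prop :=
  Summable (‖l ·‖) ∧ ∀ a, ∑' i, l i * φ i a = 0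

def RestrictsNullCombinations (φ : ι → characterSpace ℂ A) (N : Set (characterSpace ℂ A)) :
    Prop :=
  ∀ l, IsNullCombination φ l → IsNullCombination φ ((φ ⁻¹' N).indicator l)

variable {φ : ι → characterSpace ℂ A} {l : ι → ℂ}

theorem summable_norm_mul_character_apply [CompleteSpace A] (hl : Summable (‖l ·‖)) (b : A) :
    Summable fun i => ‖l i * φ i b‖ := by
  obtain ⟨C, hC⟩ := (spectrum.isCompact (𝕜 := ℂ) b).isBounded.exists_norm_le
  refine (hl.mul_right C).of_nonneg_of_le (fun _ => norm_nonneg _) fun i => ?_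
  rw [norm_mul]
  exact mul_le_mul_of_nonneg_left (hC _ (CharacterSpace.apply_mem_spectrum (φ i) b))
    (norm_nonneg _)

theorem IsNullCombination.cauchyTransform_eq_zero (h : IsNullCombination φ l) (a b : A) {w : ℂ}
    (hw : w ∉ spectrum ℂ a) :
    cauchyTransform (fun i => l i * φ i b) (fun i => φ i a) w = 0 :=
  calc cauchyTransform (fun i => l i * φ i b) (fun i => φ i a) w
      = ∑' i, l i * φ i (b * resolvent a w) := tsum_congr fun i => by
        rw [map_mul, CharacterSpace.apply_resolvent _ hw, mul_assoc]
    _ = 0 := h.2 _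

theorem IsNullCombination.apply_eq_zero_of_forall_ne (h : IsNullCombination φ l) {m : ι}
    (hm : ∀ i ≠ m, l i = 0) : l m = 0 := by
  have h₁ := h.2 1
  rwa [tsum_eq_single m fun i hi => by rw [hm i hi, zero_mul], map_one, mul_one] at h₁

theorem restrictsNullCombinations_univ : RestrictsNullCombinations φ univ := fun l hl => by
  simpa only [preimage_univ, indicator_univ] using hl

theorem RestrictsNullCombinations.inter {N N' : Set (characterSpace ℂ A)}
    (hN : RestrictsNullCombinations φ N) (hN' : RestrictsNullCombinations φ N') :
    RestrictsNullCombinations φ (N ∩ N') := fun l hl => by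
  simpa only [preimage_inter, indicator_indicator] using hN _ (hN' l hl)

variable [Countable ι] [CompleteSpace A]

theorem restrictsNullCombinations_setOf_mem_ball (hφ : IsCompact (range φ)) {a : A} {w₀ : ℂ}
    {R : ℝ} (hR : 0 < R) (hsph : ∀ i, φ i a ∉ sphere w₀ R) :
    RestrictsNullCombinations φ {χ | χ a ∈ ball w₀ R} := by
  intro l hl
  refine ⟨by simpa only [norm_indicator_eq_indicator_norm] using hl.1.indicator _, fun b => ?_⟩
  have hz : IsCompact (range fun i => φ i a) := by
    have h := hφ.image (CharacterSpace.continuous_eval a)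
    rwa [← range_comp] at h
  have h_cocompact :
      ∀ᶠ w in cocompact ℂ, cauchyTransform (fun i => l i * φ i b) (fun i => φ i a) w = 0 :=
    eventually_of_mem (spectrum.isCompact a).compl_mem_cocompact
      fun w hw => hl.cauchyTransform_eq_zero a b hw
  simpa only [preimage_ofPred_eq, indicator_mul_left] using
    tsum_indicator_eq_zero_of_cauchyTransform (summable_norm_mul_character_apply hl.1 b) hz
      h_cocompact hR hsph

theorem exists_restrictsNullCombinations_subset_of_mem_nhds (hφ : IsCompact (range φ))
    {x : characterSpace ℂ A} {U : Set (characterSpace ℂ A)} (hU : U ∈ 𝓝 x) :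
    ∃ N ⊆ U, x ∈ N ∧ RestrictsNullCombinations φ N := by
  let B : FilterBasis (characterSpace ℂ A) :=
    { sets := {N | x ∈ N ∧ RestrictsNullCombinations φ N}
      nonempty := ⟨univ, mem_univ x, restrictsNullCombinations_univ⟩
      inter_sets := fun {N N'} hN hN' => ⟨N ∩ N', ⟨⟨hN.1, hN'.1⟩, hN.2.inter hN'.2⟩, subset_rfl⟩ }
  suffices hB : B.filter ≤ 𝓝 x by
    obtain ⟨N, ⟨hxN, hN⟩, hNU⟩ := B.mem_filter_iff.1 (hB hU)
    exact ⟨N, hNU, hxN, hN⟩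
  rw [← tendsto_id', tendsto_subtype_rng, tendsto_iff_forall_eval_tendsto_topDualPairing]
  intro a
  rw [Metric.tendsto_nhds]
  intro ε hε
  obtain ⟨r, hr, hr0, hrε⟩ :=
    ((countable_range fun i => dist (φ i a) (x a)).dense_compl ℝ).exists_between hε
  have hxr : x ∈ {χ : characterSpace ℂ A | χ a ∈ ball (x a) r} := mem_ball_self hr0
  refine mem_of_superset (B.mem_filter_of_mem ⟨hxr, restrictsNullCombinations_setOf_mem_ball hφ
    hr0 fun i hi => hr ⟨i, hi⟩⟩) fun χ hχ => (mem_ball.1 hχ).trans hrε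

end NullCombination

/-- If `A` is a commutative unital complex Banach algebra, `(φ n)` a sequence of pairwise
distinct characters on `A` whose range is a compact subset of the character space, and
`(l n)` is absolutely summable with `∑' n, l n * φ n a = 0` for all `a`, then all `l n`
vanish. -/
theorem countable_lin_comb_characters_eq_zero_of_compact
    {A : Type*} [NormedCommRing A] [NormedAlgebra ℂ A] [CompleteSpace A]
    (φ : ℕ → characterSpace ℂ A) (hφ : Function.Injective φ)
    (hcpt : IsCompact (Set.range φ))
    (l : ℕ → ℂ) (hl : Summable fun n => ‖l n‖)
    (hzero : ∀ a : A, ∑' n, l n * φ n a = 0) :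
    ∀ n, l n = 0 := by
  intro m₀
  by_contra hm₀
  obtain ⟨_, ⟨m, hm, rfl⟩, U, hU, hUm⟩ := hcpt.exists_isOpen_inter_eq_singleton_of_subset
    (countable_range φ) (image_subset_range φ l.support) ⟨φ m₀, m₀, hm₀, rfl⟩
  obtain ⟨N, hNU, hmN, hN⟩ := exists_restrictsNullCombinations_subset_of_mem_nhds hcpt
    (hU.mem_nhds (hUm.symm.subset rfl).1)
  have hsingle : ∀ i ≠ m, (φ ⁻¹' N).indicator l i = 0 := fun i hi =>
    indicator_apply_eq_zero.2 fun hiN => not_not.1 fun hli =>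
      hi (hφ (hUm.subset ⟨hNU hiN, i, hli, rfl⟩))
  have hlm := (hN l ⟨hl, hzero⟩).apply_eq_zero_of_forall_ne hsingle
  exact hm (indicator_of_mem (show m ∈ φ ⁻¹' N from hmN) l ▸ hlm)
end

section
/- Let A be a commutative unital complex Banach algebra, let (φ_n)_{n∈ℕ} be a sequence of pairwise distinct characters on A, and let (λ_n)_{n∈ℕ} be a sequence of complex numbers with ∑_{n=1}^∞ |λ_n| < ∞, not all λ_n zero, such that ∑_{n=1}^∞ λ_n φ_n(a) = 0 for every a ∈ A. Let E be the closure in the character space of A (with the Gelfand topology) of the set {φ_1, φ_2, …}, and let B be the closure, in the supremum norm of C(E, ℂ), of the set of functions {φ ↦ φ(a) : a ∈ A} (the restrictions to E of the Gelfand transforms of elements of A). Then B is a proper closed subalgebra of C(E, ℂ): B ≠ C(E, ℂ). -/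
/-!
The functional `h ↦ ∑ λₙ h(φₙ)` is bounded on `C(E, ℂ)` because `∑ |λₙ| < ∞`, and it kills every
Gelfand transform, hence all of `B`. It is nonzero on `C(E, ℂ)`: Urysohn bumps equal to `1` at
`φₖ` and vanishing at more and more of the other `φₙ` give, by dominated convergence, values
tending to `λₖ`. So `B` cannot be all of `C(E, ℂ)` as soon as some `λₖ ≠ 0`.
-/

open WeakDual Filter Topology

section

variable {X 𝕜 : Type*} [TopologicalSpace X]

theorem eq_zero_of_forall_tsum_mul_apply_eq_zero [RCLike 𝕜] [NormalSpace X] [T1Space X]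
    {x : ℕ → X} (hx : Function.Injective x) {l : ℕ → 𝕜} (hl : Summable fun n => ‖l n‖)
    (h : ∀ f : C(X, 𝕜), ∑' n, l n * f (x n) = 0) : l = 0 := by
  funext k
  have bump (m : ℕ) : ∃ f : C(X, ℝ), Set.EqOn f 0 (x '' {n | n < m ∧ n ≠ k}) ∧
      Set.EqOn f 1 {x k} ∧ ∀ y, f y ∈ Set.Icc (0 : ℝ) 1 := by
    have hfin : {n | n < m ∧ n ≠ k}.Finite := (Set.finite_lt_nat m).subset fun n hn => hn.1
    refine exists_continuous_zero_one_of_isClosed (hfin.image x).isClosed isClosed_singleton ?_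
    simp only [Set.disjoint_singleton_right, Set.mem_image, not_exists, not_and]
    exact fun n hn hnk => hn.2 (hx hnk)
  choose f hf0 hf1 hf01 using bump
  have hlim : Tendsto (fun m => ∑' n, l n * ((f m (x n) : ℝ) : 𝕜)) atTop
      (𝓝 (∑' n, if n = k then l n else 0)) := by
    refine tendsto_tsum_of_dominated_convergence hl (fun n => ?_) (.of_forall fun m n => ?_)
    · split_ifs with hnk
      · subst hnk
        simp [hf1 _ (Set.mem_singleton _)]
      · refine tendsto_const_nhds.congr' ((eventually_gt_atTop n).mono fun m hm => ?_)
        simp [hf0 m ⟨n, ⟨hm, hnk⟩, rfl⟩]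
    · rw [norm_mul, RCLike.norm_ofReal, abs_of_nonneg (hf01 m _).1]
      exact mul_le_of_le_one_right (norm_nonneg _) (hf01 m _).2
  rw [tsum_ite_eq] at hlim
  exact tendsto_nhds_unique hlim (tendsto_const_nhds.congr fun m =>
    (h ⟨fun y => (f m y : 𝕜), by fun_prop⟩).symm)

variable [CompactSpace X] [NontriviallyNormedField 𝕜] [CompleteSpace 𝕜]

noncomputable def weightedEvalCLM (l : ℕ → 𝕜) (x : ℕ → X) : C(X, 𝕜) →L[𝕜] 𝕜 :=
  ∑' n, l n • ContinuousMap.evalCLM 𝕜 (x n)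

theorem weightedEvalCLM_apply {l : ℕ → 𝕜} (hl : Summable fun n => ‖l n‖) (x : ℕ → X)
    (f : C(X, 𝕜)) : weightedEvalCLM l x f = ∑' n, l n * f (x n) := by
  have hsum : Summable fun n => l n • (ContinuousMap.evalCLM 𝕜 (x n) : C(X, 𝕜) →L[𝕜] 𝕜) := by
    refine hl.of_norm_bounded fun n => (norm_smul (l n) _).trans_le ?_
    refine mul_le_of_le_one_right (norm_nonneg _) ?_
    exact ContinuousLinearMap.opNorm_le_bound _ zero_le_one fun f => by
      simpa using f.norm_coe_le_norm (x n)
  exact (ContinuousLinearMap.apply 𝕜 𝕜 f).map_tsum hsum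

theorem tsum_mul_apply_eq_zero_of_mem_closure {l : ℕ → 𝕜} (hl : Summable fun n => ‖l n‖)
    {x : ℕ → X} {S : Set C(X, 𝕜)} (hS : ∀ f ∈ S, ∑' n, l n * f (x n) = 0) {f : C(X, 𝕜)}
    (hf : f ∈ closure S) : ∑' n, l n * f (x n) = 0 := by
  have hker : S ⊆ weightedEvalCLM l x ⁻¹' {0} := fun g hg => by
    simpa [weightedEvalCLM_apply hl] using hS g hg
  simpa [weightedEvalCLM_apply hl] using
    closure_minimal hker (isClosed_singleton.preimage (weightedEvalCLM l x).continuous) hf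

end

/-- If a nonzero absolutely summable linear combination of distinct characters on a commutative
unital complex Banach algebra `A` vanishes, then the uniform closure `B` of the restrictions of
the Gelfand transforms of elements of `A` to the closure `E` of the set of those characters is a
proper closed subalgebra of `C(E, ℂ)`. -/
theorem closure_gelfand_restrict_ne_univ
    {A : Type*} [NormedCommRing A] [NormedAlgebra ℂ A] [CompleteSpace A]
    (φ : ℕ → characterSpace ℂ A) (hφ : Function.Injective φ)
    (l : ℕ → ℂ) (hl : Summable fun n => ‖l n‖) (hne : ∃ n, l n ≠ 0)
    (hzero : ∀ a : A, ∑' n, l n * φ n a = 0)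
    (E : Set (characterSpace ℂ A)) (hE : E = closure (Set.range φ))
    (B : Set C(E, ℂ))
    (hB : B = closure (Set.range fun a : A => (gelfandTransform ℂ A a).restrict E)) :
    B ≠ Set.univ := by
  obtain ⟨k, hk⟩ := hne
  have : CompactSpace E := isCompact_iff_compactSpace.mp (hE ▸ isClosed_closure).isCompact
  let ψ (n : ℕ) : E := ⟨φ n, hE ▸ subset_closure (Set.mem_range_self n)⟩
  have hψ : Function.Injective ψ := fun m n h => hφ (congrArg Subtype.val h)
  intro hBuniv
  refine hk (congrFun (eq_zero_of_forall_tsum_mul_apply_eq_zero hψ hl fun f => ?_) k)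
  refine tsum_mul_apply_eq_zero_of_mem_closure hl ?_ (hB ▸ hBuniv ▸ Set.mem_univ f)
  rintro _ ⟨a, rfl⟩
  exact hzero a
end

section
/- Let X be a nonempty compact Hausdorff topological space which has no perfect subsets. Then every closed subalgebra B of C(X, ℂ) (with the supremum norm) that contains the constant functions and separates the points of X is equal to C(X, ℂ). In other words, there are no non-trivial uniform algebras on X. -/
open Filter Topology Set

section Rudin

variable {X : Type*} [TopologicalSpace X] [CompactSpace X] [T2Space X]

set_option linter.unusedSectionVars false

/-- Every nonempty closed subset of a space with no perfect subsets has an isolated point. -/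
private lemma exists_isolated_of_no_perfect
    (hX : ∀ P : Set X, Perfect P → P = ∅)
    {K : Set X} (hK : IsClosed K) (hne : K.Nonempty) :
    ∃ t ∈ K, ∃ U : Set X, IsOpen U ∧ t ∈ U ∧ U ∩ K = {t} := by
  by_contra hcon
  push_neg at hcon
  have hperf : Perfect K := by
    refine ⟨hK, fun x hx => ?_⟩
    rw [accPt_iff_nhds]
    intro U hU
    by_contra hy
    push_neg at hy
    obtain ⟨V, hVU, hVo, hxV⟩ := mem_nhds_iff.mp hU
    have : V ∩ K = {x} := by
      apply Subset.antisymm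
      · intro y ⟨hyV, hyK⟩
        have := hy y ⟨hVU hyV, hyK⟩
        simpa using this
      · intro y hy'
        rcases hy' with rfl
        exact ⟨hxV, hx⟩
    exact hcon x hx V hVo hxV this
  have := hX K hperf
  rw [this] at hne
  exact hne.ne_empty rfl

private lemma closed_diff_isolated {m : Set X} (hmcl : IsClosed m) {t : X} {U : Set X}
    (hUo : IsOpen U) (htU : t ∈ U) (hUm : U ∩ m = {t}) : IsClosed (m \ {t}) := by
  have : m \ {t} = m ∩ Uᶜ := by
    apply Subset.antisymm
    · rintro y ⟨hym, hyt⟩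
      refine ⟨hym, fun hyU => ?_⟩
      have : y ∈ U ∩ m := ⟨hyU, hym⟩
      rw [hUm] at this
      exact hyt this
    · rintro y ⟨hym, hyU⟩
      refine ⟨hym, fun hyt => ?_⟩
      rcases hyt with rfl
      exact hyU htU
  rw [this]
  exact hmcl.inter (hUo.isClosed_compl)

/-- The key "peak point" lemma: given a closed set `W` not containing `s`, there is an
element of `B` equal to `1` at `s` and uniformly less than `1` in modulus on `W`. -/
private lemma peak_lemma
    (hX : ∀ P : Set X, Perfect P → P = ∅)
    (B : Subalgebra ℂ C(X, ℂ))
    (hsep : ∀ x y : X, x ≠ y → ∃ f ∈ B, f x ≠ f y)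
    {W : Set X} (hW : IsClosed W) {s : X} (hs : s ∉ W) :
    ∃ b ∈ B, b s = 1 ∧ ∃ r : ℝ, 0 ≤ r ∧ r < 1 ∧ ∀ y ∈ W, ‖b y‖ ≤ r := by
  by_contra hcon
  push_neg at hcon
  -- Φ Y : evaluation at s is dominated by the sup over Y, for all elements of B
  set Φ : Set X → Prop :=
    fun Y => ∀ b ∈ B, ∀ c : ℝ, 0 ≤ c → (∀ y ∈ Y, ‖b y‖ ≤ c) → ‖b s‖ ≤ c with hΦ
  have hΦW : Φ W := by
    intro b hb c hc hbd
    by_contra hgt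
    push_neg at hgt
    have hbs : b s ≠ 0 := by
      intro h0; rw [h0, norm_zero] at hgt; exact absurd hgt (not_lt.mpr hc)
    have hbsn : (0:ℝ) < ‖b s‖ := lt_of_le_of_lt hc hgt
    set b' : C(X, ℂ) := (b s)⁻¹ • b with hb'
    have hb'B : b' ∈ B := B.smul_mem hb _
    have hb's : b' s = 1 := by
      simp [hb', ContinuousMap.smul_apply, smul_eq_mul, inv_mul_cancel₀ hbs]
    have hr0 : (0:ℝ) ≤ c / ‖b s‖ := div_nonneg hc (norm_nonneg _)
    have hr1 : c / ‖b s‖ < 1 := (div_lt_one hbsn).mpr hgt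
    have hbound : ∀ y ∈ W, ‖b' y‖ ≤ c / ‖b s‖ := by
      intro y hy
      rw [hb', ContinuousMap.smul_apply, norm_smul, norm_inv]
      rw [div_eq_inv_mul]
      exact mul_le_mul_of_nonneg_left (hbd y hy) (inv_nonneg.mpr (norm_nonneg _))
    obtain ⟨y, hyW, hylt⟩ := hcon b' hb'B hb's _ hr0 hr1
    exact absurd (hbound y hyW) (not_le.mpr hylt)
  -- Zorn: find a minimal closed subset Y of W with Φ Y
  set S : Set (Set X) := {Y | Y ⊆ W ∧ IsClosed Y ∧ Φ Y} with hS
  have hWS : W ∈ S := ⟨Subset.rfl, hW, hΦW⟩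
  have hzorn : ∀ c ⊆ S, IsChain (· ⊆ ·) c → c.Nonempty →
      ∃ lb ∈ S, ∀ s ∈ c, lb ⊆ s := by
    intro 𝒞 h𝒞S hchain hne
    refine ⟨⋂₀ 𝒞, ⟨?_, ?_, ?_⟩, fun Y hY => sInter_subset_of_mem hY⟩
    · obtain ⟨Y, hY⟩ := hne
      exact (sInter_subset_of_mem hY).trans (h𝒞S hY).1
    · exact isClosed_sInter (fun Y hY => (h𝒞S hY).2.1)
    · intro b hb c hc hbd
      refine le_of_forall_pos_le_add ?_
      intro ε hε
      set F : Set X := {x | c + ε ≤ ‖b x‖} with hF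
      have hFc : IsClosed F := isClosed_le continuous_const (b.continuous.norm)
      have hFK : IsCompact F := hFc.isCompact
      have : Nonempty 𝒞 := hne.to_subtype
      have hdisj : F ∩ ⋂ Y : 𝒞, (Y : Set X) = ∅ := by
        rw [eq_empty_iff_forall_notMem]
        rintro x ⟨hxF, hx⟩
        rw [mem_iInter] at hx
        have hxi : x ∈ ⋂₀ 𝒞 := by
          intro Y hY; exact hx ⟨Y, hY⟩
        have := hbd x hxi
        have h2 : c + ε ≤ ‖b x‖ := hxF
        linarith
      have hdir : Directed (· ⊇ ·) (fun Y : 𝒞 => (Y : Set X)) := by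
        rintro ⟨Y1, hY1⟩ ⟨Y2, hY2⟩
        rcases eq_or_ne Y1 Y2 with rfl | hne'
        · exact ⟨⟨Y1, hY1⟩, Subset.rfl, Subset.rfl⟩
        · rcases hchain hY1 hY2 hne' with h | h
          · exact ⟨⟨Y1, hY1⟩, Subset.rfl, h⟩
          · exact ⟨⟨Y2, hY2⟩, h, Subset.rfl⟩
      obtain ⟨⟨Y, hY⟩, hYdisj⟩ := hFK.elim_directed_family_closed
        (fun Y : 𝒞 => (Y : Set X)) (fun Y => (h𝒞S Y.2).2.1) hdisj hdir
      refine (h𝒞S hY).2.2 b hb (c + ε) (by linarith) ?_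
      intro y hy
      by_contra hlt
      push_neg at hlt
      have : y ∈ F ∩ Y := ⟨le_of_lt hlt, hy⟩
      rw [hYdisj] at this
      exact this
  obtain ⟨m, hmW, hmin⟩ := zorn_superset_nonempty S hzorn W hWS
  obtain ⟨hmsubW, hmcl, hΦm⟩ := hmin.prop
  -- m is nonempty
  have hmne : m.Nonempty := by
    rcases eq_empty_or_nonempty m with rfl | h
    · exfalso
      have := hΦm 1 (one_mem B) 0 le_rfl (by intro y hy; exact absurd hy (notMem_empty y))
      simp at this
      exact absurd this (by norm_num)
    · exact h
  -- isolated point t of m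
  obtain ⟨t, htm, U, hUo, htU, hUm⟩ := exists_isolated_of_no_perfect hX hmcl hmne
  set m' : Set X := m \ {t} with hm'
  have hm'cl : IsClosed m' := closed_diff_isolated hmcl hUo htU hUm
  -- minimality : ¬ Φ m'
  have hnotΦ : ¬ (∀ b ∈ B, ∀ c : ℝ, 0 ≤ c → (∀ y ∈ m', ‖b y‖ ≤ c) → ‖b s‖ ≤ c) := by
    intro hΦ'
    have hsub : m ⊆ m' := hmin.2 ⟨diff_subset.trans hmsubW, hm'cl, hΦ'⟩ diff_subset
    exact (hsub htm).2 rfl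
  push_neg at hnotΦ
  obtain ⟨b, hbB, c, hc0, hbd, hgt⟩ := hnotΦ
  -- from Φ m : ‖b s‖ ≤ max c ‖b t‖, hence ‖b s‖ ≤ ‖b t‖
  have hmax : ‖b s‖ ≤ max c ‖b t‖ := by
    refine hΦm b hbB _ (le_trans hc0 (le_max_left _ _)) ?_
    intro y hy
    rcases eq_or_ne y t with rfl | hyt
    · exact le_max_right _ _
    · exact le_trans (hbd y ⟨hy, hyt⟩) (le_max_left _ _)
  have hbsbt : ‖b s‖ ≤ ‖b t‖ := by
    rcases max_cases c ‖b t‖ with ⟨h1, _⟩ | ⟨h1, _⟩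
    · rw [h1] at hmax; linarith
    · rw [h1] at hmax; exact hmax
  have hbtpos : (0:ℝ) < ‖b t‖ := lt_of_le_of_lt hc0 (lt_of_lt_of_le hgt hbsbt)
  have hbt : b t ≠ 0 := by
    intro h0; rw [h0, norm_zero] at hbtpos; exact lt_irrefl _ hbtpos
  set f : C(X, ℂ) := (b t)⁻¹ • b with hf
  have hfB : f ∈ B := B.smul_mem hbB _
  have hft : f t = 1 := by
    simp [hf, ContinuousMap.smul_apply, smul_eq_mul, inv_mul_cancel₀ hbt]
  set r : ℝ := c / ‖b t‖ with hr
  have hr0 : 0 ≤ r := div_nonneg hc0 (norm_nonneg _)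
  have hr1 : r < 1 := (div_lt_one hbtpos).mpr (lt_of_lt_of_le hgt hbsbt)
  have hfy : ∀ y ∈ m', ‖f y‖ ≤ r := by
    intro y hy
    rw [hf, ContinuousMap.smul_apply, norm_smul, norm_inv, hr, div_eq_inv_mul]
    exact mul_le_mul_of_nonneg_left (hbd y hy) (inv_nonneg.mpr (norm_nonneg _))
  set z : ℂ := f s with hz
  have hz1 : ‖z‖ ≤ 1 := by
    rw [hz, hf, ContinuousMap.smul_apply, norm_smul, norm_inv]
    rw [inv_mul_le_iff₀ hbtpos, mul_one]
    exact hbsbt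
  have hts : t ≠ s := fun h => hs (h ▸ hmsubW htm)
  rcases lt_or_eq_of_le hz1 with hzlt | hzeq
  · -- case ‖z‖ < 1 : show ‖b s‖ ≤ c, contradiction with hgt
    have key : ∀ n : ℕ, ‖b s‖ * (1 - ‖z‖ ^ n) ≤ c * (1 + r ^ n) := by
      intro n
      have hmem : b * (1 - f ^ n) ∈ B :=
        B.mul_mem hbB (B.sub_mem (one_mem B) (B.pow_mem hfB n))
      have hbound : ∀ y ∈ m, ‖(b * (1 - f ^ n)) y‖ ≤ c * (1 + r ^ n) := by
        intro y hy
        rcases eq_or_ne y t with heq | hyt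
        · rw [heq]
          have h0 : (b * (1 - f ^ n)) t = 0 := by
            rw [ContinuousMap.mul_apply]
            have : ((1 : C(X,ℂ)) - f ^ n) t = 0 := by
              simp [ContinuousMap.sub_apply, hft]
            rw [this, mul_zero]
          rw [h0, norm_zero]
          positivity
        · rw [ContinuousMap.mul_apply, norm_mul]
          have h1 : ‖b y‖ ≤ c := hbd y ⟨hy, hyt⟩
          have h2 : ‖((1 : C(X,ℂ)) - f ^ n) y‖ ≤ 1 + r ^ n := by
            have he : ((1 : C(X,ℂ)) - f ^ n) y = 1 - (f y) ^ n := by simp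
            rw [he]
            calc ‖1 - (f y) ^ n‖ ≤ ‖(1:ℂ)‖ + ‖(f y) ^ n‖ := norm_sub_le _ _
              _ = 1 + ‖f y‖ ^ n := by rw [norm_one, norm_pow]
              _ ≤ 1 + r ^ n := by
                  have := pow_le_pow_left₀ (norm_nonneg (f y)) (hfy y ⟨hy, hyt⟩) n
                  linarith
          exact mul_le_mul h1 h2 (norm_nonneg _) hc0
      have happ := hΦm _ hmem (c * (1 + r ^ n))
        (mul_nonneg hc0 (by positivity)) hbound
      have h1 : ‖(b * (1 - f ^ n)) s‖ = ‖b s‖ * ‖1 - z ^ n‖ := by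
        have he : (b * (1 - f ^ n)) s = b s * (1 - z ^ n) := by simp [hz]
        rw [he, norm_mul]
      have h2 : 1 - ‖z‖ ^ n ≤ ‖1 - z ^ n‖ := by
        have := norm_sub_norm_le (1:ℂ) (z ^ n)
        rw [norm_one, norm_pow] at this
        exact this
      calc ‖b s‖ * (1 - ‖z‖ ^ n) ≤ ‖b s‖ * ‖1 - z ^ n‖ :=
            mul_le_mul_of_nonneg_left h2 (norm_nonneg _)
        _ = ‖(b * (1 - f ^ n)) s‖ := h1.symm
        _ ≤ c * (1 + r ^ n) := happ
    have hL : Tendsto (fun n : ℕ => ‖b s‖ * (1 - ‖z‖ ^ n)) atTop (𝓝 (‖b s‖)) := by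
      have h1 := tendsto_pow_atTop_nhds_zero_of_lt_one (norm_nonneg z) hzlt
      have h2 : Tendsto (fun n : ℕ => 1 - ‖z‖ ^ n) atTop (𝓝 (1 - 0)) :=
        Tendsto.sub tendsto_const_nhds h1
      have h3 : Tendsto (fun n : ℕ => ‖b s‖ * (1 - ‖z‖ ^ n)) atTop (𝓝 (‖b s‖ * (1 - 0))) :=
        Tendsto.mul tendsto_const_nhds h2
      simpa using h3
    have hR : Tendsto (fun n : ℕ => c * (1 + r ^ n)) atTop (𝓝 c) := by
      have h1 := tendsto_pow_atTop_nhds_zero_of_lt_one hr0 hr1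
      have h2 : Tendsto (fun n : ℕ => 1 + r ^ n) atTop (𝓝 (1 + 0)) :=
        Tendsto.add tendsto_const_nhds h1
      have h3 : Tendsto (fun n : ℕ => c * (1 + r ^ n)) atTop (𝓝 (c * (1 + 0))) :=
        Tendsto.mul tendsto_const_nhds h2
      simpa using h3
    have : ‖b s‖ ≤ c := le_of_tendsto_of_tendsto' hL hR key
    exact absurd this (not_le.mpr hgt)
  · -- case ‖z‖ = 1 : all elements of B agree at s and t, contradiction with hsep
    obtain ⟨g₀, hg₀B, hg₀⟩ := hsep s t (Ne.symm hts)
    set h : C(X, ℂ) := g₀ - algebraMap ℂ C(X, ℂ) (g₀ t) with hh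
    have hhB : h ∈ B := B.sub_mem hg₀B (B.algebraMap_mem _)
    have hht : h t = 0 := by
      simp [hh, ContinuousMap.sub_apply]
    have hhs : h s ≠ 0 := by
      simp only [hh, ContinuousMap.sub_apply]
      simpa [sub_eq_zero] using hg₀
    have hhspos : (0:ℝ) < ‖h s‖ := norm_pos_iff.mpr hhs
    have key : ∀ n : ℕ, ‖h s‖ ≤ ‖h‖ * r ^ n := by
      intro n
      have hmem : h * f ^ n ∈ B := B.mul_mem hhB (B.pow_mem hfB n)
      have hbound : ∀ y ∈ m, ‖(h * f ^ n) y‖ ≤ ‖h‖ * r ^ n := by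
        intro y hy
        rcases eq_or_ne y t with heq | hyt
        · rw [heq, ContinuousMap.mul_apply, norm_mul, hht, norm_zero, zero_mul]
          exact mul_nonneg (norm_nonneg _) (pow_nonneg hr0 n)
        · rw [ContinuousMap.mul_apply, norm_mul]
          have h1 : ‖h y‖ ≤ ‖h‖ := h.norm_coe_le_norm y
          have h2 : ‖(f ^ n) y‖ ≤ r ^ n := by
            rw [show ((f ^ n) y) = (f y) ^ n by simp, norm_pow]
            exact pow_le_pow_left₀ (norm_nonneg _) (hfy y ⟨hy, hyt⟩) n
          exact mul_le_mul h1 h2 (norm_nonneg _) (norm_nonneg _)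
      have happ := hΦm _ hmem (‖h‖ * r ^ n)
        (mul_nonneg (norm_nonneg _) (pow_nonneg hr0 n)) hbound
      have he : (h * f ^ n) s = h s * z ^ n := by simp [hz]
      calc ‖h s‖ = ‖h s‖ * ‖z‖ ^ n := by rw [hzeq, one_pow, mul_one]
        _ = ‖(h * f ^ n) s‖ := by rw [he, norm_mul, norm_pow]
        _ ≤ ‖h‖ * r ^ n := happ
    have htend : Tendsto (fun n : ℕ => ‖h‖ * r ^ n) atTop (𝓝 0) := by
      have := (tendsto_pow_atTop_nhds_zero_of_lt_one hr0 hr1).const_mul ‖h‖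
      simpa using this
    have : ‖h s‖ ≤ 0 :=
      le_of_tendsto_of_tendsto' tendsto_const_nhds htend key
    linarith

/-- Urysohn-type approximation: a function small on a closed set `K` is close to a function
vanishing on `K`. -/
private lemma approx_vanish (K : Set X) (hK : IsClosed K) (h : C(X,ℂ)) (c : ℝ) (hc : 0 < c)
    (hb : ∀ x ∈ K, ‖h x‖ < c) :
    ∃ v : C(X,ℂ), (∀ x ∈ K, v x = 0) ∧ ‖h - v‖ ≤ c := by
  set F : Set X := {x | c ≤ ‖h x‖} with hF
  have hFc : IsClosed F := isClosed_le continuous_const h.continuous.norm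
  have hdisj : Disjoint F K := by
    rw [Set.disjoint_left]
    intro x hxF hxK
    exact absurd (hb x hxK) (not_lt.mpr hxF)
  obtain ⟨u, hu0, hu1, huI⟩ := exists_continuous_zero_one_of_isClosed hFc hK hdisj
  set uC : C(X, ℂ) := ⟨fun x => ((u x : ℝ) : ℂ), Complex.continuous_ofReal.comp u.continuous⟩
    with huC
  refine ⟨h - uC * h, ?_, ?_⟩
  · intro x hx
    have hux : u x = 1 := hu1 hx
    simp [ContinuousMap.sub_apply, ContinuousMap.mul_apply, huC, hux]
  · have he : h - (h - uC * h) = uC * h := by ring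
    rw [he, ContinuousMap.norm_le _ hc.le]
    intro x
    rw [ContinuousMap.mul_apply, norm_mul]
    rcases le_or_gt c ‖h x‖ with hcx | hcx
    · have hux : u x = 0 := hu0 hcx
      simp [huC, hux]
      exact hc.le
    · have hub : ‖uC x‖ ≤ 1 := by
        rw [huC]
        simp only [ContinuousMap.coe_mk]
        rw [Complex.norm_real]
        rw [Real.norm_eq_abs, abs_le]
        exact ⟨by linarith [(huI x).1], (huI x).2⟩
      calc ‖uC x‖ * ‖h x‖ ≤ 1 * ‖h x‖ := mul_le_mul_of_nonneg_right hub (norm_nonneg _)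
        _ = ‖h x‖ := one_mul _
        _ ≤ c := hcx.le

end Rudin

/-- (Rudin) If `X` is a nonempty compact Hausdorff space with no (nonempty) perfect subsets,
then there are no non-trivial uniform algebras on `X`: every closed subalgebra of `C(X, ℂ)`
containing the constants and separating points is all of `C(X, ℂ)`. -/
theorem subalgebra_eq_top_of_no_perfect_subsets
    {X : Type*} [TopologicalSpace X] [CompactSpace X] [T2Space X] [Nonempty X]
    (hX : ∀ P : Set X, Perfect P → P = ∅)
    (B : Subalgebra ℂ C(X, ℂ)) (hclosed : IsClosed (B : Set C(X, ℂ)))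
    (hsep : ∀ x y : X, x ≠ y → ∃ f ∈ B, f x ≠ f y) :
    B = ⊤ := by
  have hBc : closure (B : Set C(X,ℂ)) = B := hclosed.closure_eq
  set S : Set (Set X) := {K | IsClosed K ∧ ∀ h : C(X,ℂ), (∀ x ∈ K, h x = 0) → h ∈ B} with hS
  have hunivS : univ ∈ S := by
    refine ⟨isClosed_univ, fun h hh => ?_⟩
    have : h = 0 := ContinuousMap.ext fun x => hh x (mem_univ x)
    rw [this]
    exact zero_mem B
  have hzorn : ∀ c ⊆ S, IsChain (· ⊆ ·) c → c.Nonempty →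
      ∃ lb ∈ S, ∀ s ∈ c, lb ⊆ s := by
    intro 𝒞 h𝒞S hchain hne
    refine ⟨⋂₀ 𝒞, ⟨isClosed_sInter (fun Y hY => (h𝒞S hY).1), ?_⟩,
      fun Y hY => sInter_subset_of_mem hY⟩
    intro h hh
    have : h ∈ closure (B : Set C(X,ℂ)) := by
      rw [Metric.mem_closure_iff]
      intro ε hε
      set F : Set X := {x | ε/2 ≤ ‖h x‖} with hF
      have hFc : IsClosed F := isClosed_le continuous_const h.continuous.norm
      have hFK : IsCompact F := hFc.isCompact
      have : Nonempty 𝒞 := hne.to_subtype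
      have hdisj : F ∩ ⋂ Y : 𝒞, (Y : Set X) = ∅ := by
        rw [eq_empty_iff_forall_notMem]
        rintro x ⟨hxF, hx⟩
        rw [mem_iInter] at hx
        have hxi : x ∈ ⋂₀ 𝒞 := fun Y hY => hx ⟨Y, hY⟩
        have h0 : h x = 0 := hh x hxi
        have h2 : ε/2 ≤ ‖h x‖ := hxF
        rw [h0, norm_zero] at h2
        linarith
      have hdir : Directed (· ⊇ ·) (fun Y : 𝒞 => (Y : Set X)) := by
        rintro ⟨Y1, hY1⟩ ⟨Y2, hY2⟩
        rcases eq_or_ne Y1 Y2 with rfl | hne'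
        · exact ⟨⟨Y1, hY1⟩, Subset.rfl, Subset.rfl⟩
        · rcases hchain hY1 hY2 hne' with h' | h'
          · exact ⟨⟨Y1, hY1⟩, Subset.rfl, h'⟩
          · exact ⟨⟨Y2, hY2⟩, h', Subset.rfl⟩
      obtain ⟨⟨Y, hY⟩, hYdisj⟩ := hFK.elim_directed_family_closed
        (fun Y : 𝒞 => (Y : Set X)) (fun Y => (h𝒞S Y.2).1) hdisj hdir
      have hsmall : ∀ x ∈ Y, ‖h x‖ < ε/2 := by
        intro x hx
        by_contra hlt
        push_neg at hlt
        have : x ∈ F ∩ Y := ⟨hlt, hx⟩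
        rw [hYdisj] at this
        exact this
      obtain ⟨v, hv0, hvle⟩ := approx_vanish Y (h𝒞S hY).1 h (ε/2) (by linarith) hsmall
      have hvB : v ∈ B := (h𝒞S hY).2 v hv0
      refine ⟨v, hvB, ?_⟩
      rw [dist_eq_norm]
      calc ‖h - v‖ ≤ ε/2 := hvle
        _ < ε := by linarith
    rwa [hBc] at this
  obtain ⟨m, hmu, hmin⟩ := zorn_superset_nonempty S hzorn univ hunivS
  obtain ⟨hmcl, hmB⟩ := hmin.prop
  rcases eq_empty_or_nonempty m with hm0 | hmne
  · -- m = ∅ : every continuous function is in B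
    have hall : ∀ h : C(X,ℂ), h ∈ B := by
      intro h
      refine hmB h ?_
      rw [hm0]
      intro x hx
      exact absurd hx (notMem_empty x)
    exact eq_top_iff.mpr fun x _ => hall x
  · exfalso
    obtain ⟨s, hsm, U, hUo, hsU, hUm⟩ := exists_isolated_of_no_perfect hX hmcl hmne
    set m' : Set X := m \ {s} with hm'
    have hm'cl : IsClosed m' := closed_diff_isolated hmcl hUo hsU hUm
    have hm'S : m' ∈ S := by
      refine ⟨hm'cl, ?_⟩
      intro h hh
      rcases eq_or_ne (h s) 0 with hhs | hhs
      · refine hmB h ?_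
        intro x hx
        rcases eq_or_ne x s with heq | hxs
        · rw [heq]; exact hhs
        · exact hh x ⟨hx, hxs⟩
      · have : h ∈ closure (B : Set C(X,ℂ)) := by
          rw [Metric.mem_closure_iff]
          intro ε hε
          have hsnot : s ∉ m' := fun h' => h'.2 rfl
          obtain ⟨b₁, hb₁B, hb₁s, r, hr0, hr1, hb₁y⟩ := peak_lemma hX B hsep hm'cl hsnot
          have hhs' : (0:ℝ) < ‖h s‖ := norm_pos_iff.mpr hhs
          obtain ⟨n, hn⟩ := exists_pow_lt_of_lt_one
            (show (0:ℝ) < ε/(2 * ‖h s‖) by positivity) hr1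
          set b : C(X,ℂ) := b₁ ^ n with hb
          have hbB : b ∈ B := B.pow_mem hb₁B n
          have hbs : b s = 1 := by
            rw [hb]
            rw [show (b₁ ^ n) s = (b₁ s) ^ n by simp, hb₁s, one_pow]
          set g : C(X,ℂ) := h - (h s) • b with hg
          have hgm : ∀ x ∈ m, ‖g x‖ < ε/2 := by
            intro x hx
            rcases eq_or_ne x s with heq | hxs
            · rw [heq]
              have : g s = 0 := by
                rw [hg, ContinuousMap.sub_apply, ContinuousMap.smul_apply, hbs,
                  smul_eq_mul, mul_one, sub_self]
              rw [this, norm_zero]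
              positivity
            · have hx' : x ∈ m' := ⟨hx, hxs⟩
              have hgx : g x = - (h s * b x) := by
                rw [hg, ContinuousMap.sub_apply, ContinuousMap.smul_apply, hh x hx',
                  smul_eq_mul, zero_sub]
              rw [hgx, norm_neg, norm_mul]
              have hbx : ‖b x‖ ≤ r ^ n := by
                rw [hb, show (b₁ ^ n) x = (b₁ x) ^ n by simp, norm_pow]
                exact pow_le_pow_left₀ (norm_nonneg _) (hb₁y x hx') n
              have hkey : ‖h s‖ * r ^ n < ε/2 := by
                rw [← div_div] at hn
                exact (lt_div_iff₀' hhs').mp hn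
              calc ‖h s‖ * ‖b x‖ ≤ ‖h s‖ * r ^ n :=
                    mul_le_mul_of_nonneg_left hbx (norm_nonneg _)
                _ < ε/2 := hkey
          obtain ⟨v, hv0, hvle⟩ := approx_vanish m hmcl g (ε/2) (by linarith) hgm
          have hvB : v ∈ B := hmB v hv0
          refine ⟨(h s) • b + v, B.add_mem (B.smul_mem hbB _) hvB, ?_⟩
          rw [dist_eq_norm]
          have he : h - ((h s) • b + v) = g - v := by
            rw [hg]; abel
          rw [he]
          calc ‖g - v‖ ≤ ε/2 := hvle
            _ < ε := by linarith
        rwa [hBc] at this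
    have hsub : m ⊆ m' := hmin.2 hm'S diff_subset
    exact (hsub hsm).2 rfl
end

section
/- There exist a sequence (α_n)_{n≥2} of pairwise distinct nonzero complex numbers in the open unit disc Δ(0,1) and a sequence (r_n)_{n≥2} of positive real numbers such that: the closed discs cl Δ(α_n, r_n) = {z ∈ ℂ : |z − α_n| ≤ r_n} are pairwise disjoint, each cl Δ(α_n, r_n) is contained in the open unit disc Δ(0,1), and the Lebesgue (area) measure of the set cl Δ(0,1) \ ⋃_{n=2}^∞ cl Δ(α_n, r_n) is zero. -/
/-!
Apply the Besicovitch covering theorem to the punctured open disc, with every admissible radius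
smaller than the distance of the centre to the unit circle: this yields countably many disjoint
closed discs inside the open disc covering the punctured disc up to a null set, and the puncture
and the unit circle are null as well. There are infinitely many discs, since a finite union of
closed discs is closed while the open disc is not, and an open set of measure zero is empty.
-/

open Metric MeasureTheory Set

theorem Set.Infinite.exists_injective_nat_range_eq {α : Type*} {t : Set α} (ht : t.Infinite)
    (hc : t.Countable) : ∃ f : ℕ → α, Function.Injective f ∧ range f = t := by
  obtain ⟨_⟩ := nonempty_denumerable_iff.2 ⟨hc.to_subtype, ht.to_subtype⟩
  let e : ℕ ≃ t := (Denumerable.eqv t).symm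
  exact ⟨(↑) ∘ e, Subtype.val_injective.comp e.injective, by
    rw [range_comp, e.range_eq_univ, image_univ, Subtype.range_coe]⟩

theorem Set.infinite_of_measure_sdiff_biUnion_eq_zero {X ι : Type*} [TopologicalSpace X]
    [MeasurableSpace X] {μ : Measure X} [μ.IsOpenPosMeasure] {U : Set X} (hU : IsOpen U)
    (hU' : ¬IsClosed U) {t : Set ι} {B : ι → Set X} (hB : ∀ i ∈ t, IsClosed (B i))
    (hBU : ∀ i ∈ t, B i ⊆ U) (hnull : μ (U \ ⋃ i ∈ t, B i) = 0) : t.Infinite := by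
  intro ht
  have hK : IsClosed (⋃ i ∈ t, B i) := ht.isClosed_biUnion hB
  have hUK : U \ ⋃ i ∈ t, B i = ∅ := ((hU.sdiff hK).measure_eq_zero_iff μ).1 hnull
  have hU_eq : U = ⋃ i ∈ t, B i := (sdiff_eq_empty.1 hUK).antisymm (iUnion₂_subset hBU)
  exact hU' (hU_eq ▸ hK)

section NormedSpace

variable {E : Type*} [NormedAddCommGroup E] [NormedSpace ℝ E]

theorem Metric.not_isClosed_ball [Nontrivial E] (x : E) {r : ℝ} (hr : 0 < r) :
    ¬IsClosed (ball x r) := fun h ↦ by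
  have hclopen : frontier (ball x r) = ∅ :=
    isClopen_iff_frontier_eq_empty.1 ⟨h, isOpen_ball⟩
  rw [frontier_ball x hr.ne'] at hclopen
  exact (NormedSpace.sphere_nonempty.2 hr.le).ne_empty hclopen

variable [MeasurableSpace E] [BorelSpace E] [FiniteDimensional ℝ E] (μ : Measure E)
  [μ.IsAddHaarMeasure]

theorem MeasureTheory.Measure.ball_ae_eq_closedBall (x : E) {r : ℝ} (hr : r ≠ 0) :
    ball x r =ᵐ[μ] closedBall x r :=
  ae_eq_set.2 ⟨by simp [sdiff_eq_empty.2 ball_subset_closedBall],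
    by rw [closedBall_sdiff_ball]; exact Measure.addHaar_sphere_of_ne_zero μ x hr⟩

theorem exists_disjoint_closedBalls_ae_cover_closedBall [Nontrivial E] (a : E) {R : ℝ}
    (hR : 0 < R) :
    ∃ (t : Set E) (r : E → ℝ), t.Countable ∧ t.Infinite ∧ t ⊆ ball a R \ {a} ∧
      (∀ x ∈ t, 0 < r x ∧ closedBall x (r x) ⊆ ball a R) ∧
      t.PairwiseDisjoint (fun x ↦ closedBall x (r x)) ∧
      μ (closedBall a R \ ⋃ x ∈ t, closedBall x (r x)) = 0 := by
  obtain ⟨t, r, ht_count, ht_sub, hr, hnull, ht_disj⟩ :=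
    Besicovitch.exists_disjoint_closedBall_covering_ae μ (fun _ ↦ Ioi 0) (ball a R \ {a} : Set E)
      (fun _ _ δ hδ ↦ ⟨δ / 2, half_pos hδ, half_pos hδ, half_lt_self hδ⟩)
      (fun x ↦ R - dist x a) (fun x hx ↦ sub_pos.2 (mem_ball.1 hx.1))
  have hball : ∀ x ∈ t, closedBall x (r x) ⊆ ball a R := fun x hx ↦
    closedBall_subset_ball' (by linarith [(hr x hx).2.2])
  have hpunct : (ball a R \ {a} : Set E) =ᵐ[μ] closedBall a R :=
    (sdiff_null_ae_eq_self (measure_singleton a)).trans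
      (Measure.ball_ae_eq_closedBall μ a hR.ne')
  have hcover : μ (closedBall a R \ ⋃ x ∈ t, closedBall x (r x)) = 0 :=
    (measure_congr (ae_eq_set_sdiff hpunct .rfl)).symm.trans hnull
  have hcover' : μ (ball a R \ ⋃ x ∈ t, closedBall x (r x)) = 0 :=
    (measure_congr (ae_eq_set_sdiff (Measure.ball_ae_eq_closedBall μ a hR.ne') .rfl)).trans hcover
  refine ⟨t, r, ht_count, ?_, ht_sub, fun x hx ↦ ⟨(hr x hx).2.1, hball x hx⟩, ht_disj, hcover⟩
  exact Set.infinite_of_measure_sdiff_biUnion_eq_zero isOpen_ball (not_isClosed_ball a hR)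
    (fun _ _ ↦ isClosed_closedBall) hball hcover'

end NormedSpace

/-- (Wolff) There are pairwise disjoint closed discs, with distinct nonzero centres lying in
the open unit disc of `ℂ`, contained in the open unit disc, whose union fills the closed unit
disc up to a set of Lebesgue area measure zero. -/
theorem exists_disjoint_closed_discs_filling_unit_disc :
    ∃ (α : ℕ → ℂ) (r : ℕ → ℝ),
      Function.Injective α ∧ (∀ n, α n ≠ 0) ∧ (∀ n, ‖α n‖ < 1) ∧
      (∀ n, 0 < r n) ∧
      (∀ m n, m ≠ n → Disjoint (closedBall (α m) (r m)) (closedBall (α n) (r n))) ∧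
      (∀ n, closedBall (α n) (r n) ⊆ ball (0 : ℂ) 1) ∧
      volume (closedBall (0 : ℂ) 1 \ ⋃ n, closedBall (α n) (r n)) = 0 := by
  obtain ⟨t, r, ht_count, ht_inf, ht_sub, hr, ht_disj, hcover⟩ :=
    exists_disjoint_closedBalls_ae_cover_closedBall (volume : Measure ℂ) 0 one_pos
  obtain ⟨α, hα_inj, rfl⟩ := ht_inf.exists_injective_nat_range_eq ht_count
  have hα : ∀ n, α n ∈ ball (0 : ℂ) 1 \ {0} := fun n ↦ ht_sub (mem_range_self n)
  refine ⟨α, r ∘ α, hα_inj, fun n ↦ (hα n).2, fun n ↦ by simpa using (hα n).1,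
    fun n ↦ (hr _ (mem_range_self n)).1, fun m n hmn ↦ ?_,
    fun n ↦ (hr _ (mem_range_self n)).2, by rwa [biUnion_range] at hcover⟩
  exact ht_disj (mem_range_self m) (mem_range_self n) (hα_inj.ne hmn)
end

section
/- Let (α_n)_{n≥2} be a sequence of complex numbers in the open unit disc and (r_n)_{n≥2} a sequence of positive real numbers such that the closed discs cl Δ(α_n, r_n) are pairwise disjoint, each is contained in the open unit disc Δ(0,1), and the Lebesgue (area) measure of cl Δ(0,1) \ ⋃_{n=2}^∞ cl Δ(α_n, r_n) is zero. Then for every open set U containing the closed unit disc cl Δ(0,1) and every function f : ℂ → ℂ that is complex-differentiable (holomorphic) on U, one has π · f(0) = ∑_{n=2}^∞ π r_n² · f(α_n), where the series converges absolutely. -/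
/-!
Integrating the circle mean value property in polar coordinates shows that a function holomorphic
near `closedBall c R` has integral `π R² f c` over it. The discs tile the unit disc up to a null
set, so countable additivity of the integral turns `∫_{closedBall 0 1} f = π f 0` into the series;
it converges absolutely because `‖∫_{B_n} f‖ ≤ ∫_{B_n} ‖f‖` and these integrals sum to
`∫_{closedBall 0 1} ‖f‖`.
-/

open Metric MeasureTheory Set Real Function

section PolarCoordinates

variable {E : Type*} [NormedAddCommGroup E] [NormedSpace ℝ E]

theorem Complex.polarCoord_symm_eq_circleMap (p : ℝ × ℝ) :
    Complex.polarCoord.symm p = circleMap 0 p.1 p.2 := by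
  simp [circleMap, Complex.exp_mul_I]

theorem integral_Ioo_circleMap_eq_two_pi_smul_circleAverage (g : ℂ → E) (c : ℂ) (ρ : ℝ) :
    ∫ θ in Ioo (-π) π, g (circleMap c ρ θ) = (2 * π) • circleAverage g c ρ := by
  rw [circleAverage_eq_integral_add (-π), smul_inv_smul₀ (by positivity),
    intervalIntegral.integral_comp_add_right (fun θ => g (circleMap c ρ θ)),
    intervalIntegral.integral_of_le (by linarith [pi_pos]), integral_Ioc_eq_integral_Ioo]
  rw [zero_add, show 2 * π + -π = π by ring]

theorem integral_closedBall_eq_intervalIntegral_circleAverage {g : ℂ → E} {c : ℂ} {R : ℝ}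
    (hR : 0 ≤ R) (hg : ContinuousOn g (closedBall c R)) :
    ∫ z in closedBall c R, g z = ∫ ρ in 0..R, (2 * π * ρ) • circleAverage g c ρ := by
  set F : ℝ × ℝ → E := fun p => p.1 • g (circleMap c p.1 p.2)
  set T : Set (ℝ × ℝ) := Ioc 0 R ×ˢ Ioo (-π) π
  have hT : MeasurableSet T := measurableSet_Ioc.prod measurableSet_Ioo
  have hT_target : polarCoord.target ∩ T = T :=
    inter_eq_self_of_subset_right (prod_mono Ioc_subset_Ioi_self subset_rfl)
  -- Substituting `z = c + ρ e^{iθ}`, the disc is the part `ρ ≤ R` of the polar target.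
  have h_polar : ∫ z in closedBall c R, g z = ∫ p in T, F p := by
    rw [← integral_indicator measurableSet_closedBall, ← integral_add_left_eq_self _ c,
      ← Complex.integral_comp_polarCoord_symm, ← hT_target, ← setIntegral_indicator hT]
    refine setIntegral_congr_fun polarCoord.open_target.measurableSet fun p ⟨hp₁, hp₂⟩ => ?_
    replace hp₁ : 0 < p.1 := hp₁
    have hcircle : c + Complex.polarCoord.symm p = circleMap c p.1 p.2 := by
      rw [Complex.polarCoord_symm_eq_circleMap, circleMap_zero, circleMap]
    have hmem : circleMap c p.1 p.2 ∈ closedBall c R ↔ p ∈ T := by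
      simp [T, dist_eq_norm, circleMap_sub_center, abs_of_pos hp₁, hp₁, hp₂]
    by_cases hpT : p ∈ T
    · rw [hcircle, indicator_of_mem (hmem.2 hpT), indicator_of_mem hpT]
    · rw [hcircle, indicator_of_notMem (mt hmem.1 hpT), indicator_of_notMem hpT, smul_zero]
  have hF : IntegrableOn F T := by
    refine ContinuousOn.integrableOn_compact (isCompact_Icc.prod isCompact_Icc) ?_
      |>.mono_set (prod_mono Ioc_subset_Icc_self Ioo_subset_Icc_self)
    refine continuousOn_fst.smul (hg.comp (by fun_prop) fun p hp => ?_)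
    simpa [dist_eq_norm, circleMap_sub_center, abs_of_nonneg hp.1.1] using hp.1.2
  rw [h_polar, Measure.volume_eq_prod, setIntegral_prod F hF, intervalIntegral.integral_of_le hR]
  refine setIntegral_congr_fun measurableSet_Ioc fun ρ _ => ?_
  rw [integral_smul, integral_Ioo_circleMap_eq_two_pi_smul_circleAverage, smul_smul, mul_comm ρ]

end PolarCoordinates

theorem DiffContOnCl.setIntegral_closedBall {E : Type*} [NormedAddCommGroup E] [NormedSpace ℂ E]
    [CompleteSpace E] {g : ℂ → E} {c : ℂ} {R : ℝ} (hR : 0 ≤ R) (hg : DiffContOnCl ℂ g (ball c R)) :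
    ∫ z in closedBall c R, g z = (π * R ^ 2) • g c := by
  have h_avg : ∀ ρ ∈ uIcc 0 R, (2 * π * ρ) • Real.circleAverage g c ρ = (2 * π * ρ) • g c := by
    intro ρ hρ
    rw [uIcc_of_le hR] at hρ
    rw [(hg.mono (ball_subset_ball (abs_le.2 ⟨by linarith [hρ.1], hρ.2⟩))).circleAverage]
  rw [integral_closedBall_eq_intervalIntegral_circleAverage hR hg.continuousOn_ball,
    intervalIntegral.integral_congr h_avg, intervalIntegral.integral_smul_const,
    intervalIntegral.integral_const_mul, integral_id]
  congr 1
  ring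

section DisjointUnion

variable {ι X E : Type*} [Countable ι] [MeasurableSpace X] {μ : Measure X}
  [NormedAddCommGroup E] [NormedSpace ℝ E] {f : X → E} {s : ι → Set X}

theorem hasSum_setIntegral_of_pairwise_disjoint_of_measure_diff_eq_zero {S : Set X}
    (hs : ∀ i, MeasurableSet (s i)) (hd : Pairwise (Disjoint on s)) (hsS : ∀ i, s i ⊆ S)
    (hnull : μ (S \ ⋃ i, s i) = 0) (hf : IntegrableOn f S μ) :
    HasSum (fun i => ∫ x in s i, f x ∂μ) (∫ x in S, f x ∂μ) := by
  have h_ae : (⋃ i, s i) =ᵐ[μ] S :=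
    ae_eq_set.2 ⟨by rw [sdiff_eq_empty.2 (iUnion_subset hsS), measure_empty], hnull⟩
  rw [← setIntegral_congr_set h_ae]
  exact hasSum_integral_iUnion hs hd (hf.mono_set (iUnion_subset hsS))

theorem summable_norm_setIntegral_of_pairwise_disjoint (hs : ∀ i, MeasurableSet (s i))
    (hd : Pairwise (Disjoint on s)) (hf : IntegrableOn f (⋃ i, s i) μ) :
    Summable fun i => ‖∫ x in s i, f x ∂μ‖ :=
  (hasSum_integral_iUnion hs hd hf.norm).summable.of_nonneg_of_le (fun _ => norm_nonneg _)
    fun _ => norm_integral_le_integral_norm _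

end DisjointUnion

theorem pi_mul_value_at_zero_eq_tsum_of_discs_filling_general
    (α : ℕ → ℂ) (r : ℕ → ℝ)
    (hr : ∀ n, 0 < r n)
    (hdisj : ∀ m n, m ≠ n → Disjoint (closedBall (α m) (r m)) (closedBall (α n) (r n)))
    (hsub : ∀ n, closedBall (α n) (r n) ⊆ ball (0 : ℂ) 1)
    (hfill : volume (closedBall (0 : ℂ) 1 \ ⋃ n, closedBall (α n) (r n)) = 0)
    (U : Set ℂ) (hUc : closedBall (0 : ℂ) 1 ⊆ U)
    (f : ℂ → ℂ) (hf : DifferentiableOn ℂ f U) :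
    HasSum (fun n => ((Real.pi * r n ^ 2 : ℝ) : ℂ) * f (α n)) ((Real.pi : ℂ) * f 0) ∧
      Summable fun n => ‖((Real.pi * r n ^ 2 : ℝ) : ℂ) * f (α n)‖ := by
  have hB : ∀ n, closedBall (α n) (r n) ⊆ closedBall 0 1 :=
    fun n => (hsub n).trans ball_subset_closedBall
  have hf_int : IntegrableOn f (closedBall 0 1) :=
    (hf.continuousOn.mono hUc).integrableOn_compact (isCompact_closedBall 0 1)
  have h_disc : ∀ n, ∫ z in closedBall (α n) (r n), f z = ((π * r n ^ 2 : ℝ) : ℂ) * f (α n) :=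
    fun n => by rw [(hf.diffContOnCl_ball ((hB n).trans hUc)).setIntegral_closedBall (hr n).le,
      Complex.real_smul]
  have h_unit : ∫ z in closedBall 0 1, f z = π * f 0 := by
    rw [(hf.diffContOnCl_ball hUc).setIntegral_closedBall zero_le_one, Complex.real_smul]
    push_cast
    ring
  simp only [← h_disc, ← h_unit]
  exact ⟨hasSum_setIntegral_of_pairwise_disjoint_of_measure_diff_eq_zero
      (fun _ => measurableSet_closedBall) hdisj hB hfill hf_int,
    summable_norm_setIntegral_of_pairwise_disjoint (fun _ => measurableSet_closedBall) hdisj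
      (hf_int.mono_set (iUnion_subset hB))⟩

/-- If pairwise disjoint closed discs `closedBall (α n) (r n)` inside the open unit disc fill
the closed unit disc up to area measure zero, then for every function `f` holomorphic on an
open neighbourhood of the closed unit disc, `π * f 0 = ∑' n, π * r n ^ 2 * f (α n)`, the
series converging absolutely. -/
theorem pi_mul_value_at_zero_eq_tsum_of_discs_filling
    (α : ℕ → ℂ) (r : ℕ → ℝ)
    (hα : ∀ n, ‖α n‖ < 1) (hr : ∀ n, 0 < r n)
    (hdisj : ∀ m n, m ≠ n → Disjoint (closedBall (α m) (r m)) (closedBall (α n) (r n)))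
    (hsub : ∀ n, closedBall (α n) (r n) ⊆ ball (0 : ℂ) 1)
    (hfill : volume (closedBall (0 : ℂ) 1 \ ⋃ n, closedBall (α n) (r n)) = 0)
    (U : Set ℂ) (hU : IsOpen U) (hUc : closedBall (0 : ℂ) 1 ⊆ U)
    (f : ℂ → ℂ) (hf : DifferentiableOn ℂ f U) :
    HasSum (fun n => ((Real.pi * r n ^ 2 : ℝ) : ℂ) * f (α n)) ((Real.pi : ℂ) * f 0) ∧
      Summable fun n => ‖((Real.pi * r n ^ 2 : ℝ) : ℂ) * f (α n)‖ :=
  pi_mul_value_at_zero_eq_tsum_of_discs_filling_general α r hr hdisj hsub hfill U hUc f hf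
end

section
/- Suppose there exist a commutative unital complex Banach algebra A, a sequence (φ_n)_{n∈ℕ} of pairwise distinct characters on A, and a sequence (λ_n)_{n∈ℕ} of complex numbers with ∑_{n=1}^∞ |λ_n| < ∞, not all λ_n zero, such that ∑_{n=1}^∞ λ_n φ_n(a) = 0 for every a ∈ A. Then there exists a bounded sequence (α_n)_{n∈ℕ} of pairwise distinct complex numbers such that ∑_{n=1}^∞ λ_n α_n^k = 0 for every integer k ≥ 0. -/
/-!
The distinct characters `φ n` separate the points of `A` pairwise, and by the Baire category
theorem a single element `a` separates all of them at once: for `m ≠ n` the set where `φ m` and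
`φ n` differ is the complement of a proper closed subspace, hence open and dense. Then
`α n := φ n a` works: it lies in the (bounded) spectrum of `a`, and
`∑' n, l n * α n ^ k = ∑' n, l n * φ n (a ^ k) = 0`.
-/

open WeakDual

theorem Submodule.dense_compl_of_ne_top {R M : Type*} [Ring R] [TopologicalSpace R]
    [TopologicalSpace M] [AddCommGroup M] [ContinuousAdd M] [Module R M] [ContinuousSMul R M]
    [Filter.NeBot (nhdsWithin (0 : R) {x : R | IsUnit x})] {p : Submodule R M} (hp : p ≠ ⊤) :
    Dense (p : Set M)ᶜ := by
  rw [← interior_eq_empty_iff_dense_compl, ← Set.not_nonempty_iff_eq_empty]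
  exact fun h => hp (p.eq_top_of_nonempty_interior' h)

namespace ContinuousLinearMap

variable {𝕜 E F : Type*} [NontriviallyNormedField 𝕜] [AddCommGroup E] [Module 𝕜 E]
  [TopologicalSpace E] [ContinuousAdd E] [ContinuousSMul 𝕜 E]
  [AddCommGroup F] [Module 𝕜 F] [TopologicalSpace F] [IsTopologicalAddGroup F]

theorem dense_setOf_apply_ne {f g : E →L[𝕜] F} (h : f ≠ g) : Dense {x | f x ≠ g x} := by
  have hker : LinearMap.ker ((f - g : E →L[𝕜] F) : E →ₗ[𝕜] F) ≠ ⊤ := fun htop =>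
    h <| sub_eq_zero.mp <| ContinuousLinearMap.coe_injective (LinearMap.ker_eq_top.mp htop)
  convert Submodule.dense_compl_of_ne_top hker using 1
  ext x
  simp [sub_eq_zero]

theorem exists_injective_apply [T2Space F] [BaireSpace E] {ι : Type*} [Countable ι]
    {f : ι → E →L[𝕜] F} (hf : Function.Injective f) : ∃ x, Function.Injective fun i => f i x := by
  let U : {p : ι × ι // p.1 ≠ p.2} → Set E := fun p => {x | f p.1.1 x ≠ f p.1.2 x}
  have hU : Dense (⋂ p, U p) := dense_iInter_of_isOpen
    (fun p => isOpen_ne_fun (f p.1.1).continuous (f p.1.2).continuous)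
    (fun p => dense_setOf_apply_ne (hf.ne p.2))
  obtain ⟨x, hx⟩ := hU.nonempty
  refine ⟨x, fun i j hij => by_contra fun hne => ?_⟩
  exact Set.mem_iInter.mp hx ⟨(i, j), hne⟩ hij

end ContinuousLinearMap

theorem WeakDual.CharacterSpace.toCLM_injective {𝕜 A : Type*} [CommSemiring 𝕜]
    [TopologicalSpace 𝕜] [ContinuousAdd 𝕜] [ContinuousConstSMul 𝕜 𝕜] [NonUnitalNonAssocSemiring A]
    [TopologicalSpace A] [Module 𝕜 A] :
    Function.Injective (CharacterSpace.toCLM : characterSpace 𝕜 A → A →L[𝕜] 𝕜) :=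
  fun _ _ h => CharacterSpace.ext fun a => congr($h a)

theorem exists_bounded_distinct_seq_with_vanishing_moments_general
    {A : Type*} [NormedCommRing A] [NormedAlgebra ℂ A] [CompleteSpace A]
    (φ : ℕ → characterSpace ℂ A) (hφ : Function.Injective φ)
    (l : ℕ → ℂ)
    (hzero : ∀ a : A, ∑' n, l n * φ n a = 0) :
    ∃ α : ℕ → ℂ, Function.Injective α ∧ Bornology.IsBounded (Set.range α) ∧
      ∀ k : ℕ, ∑' n, l n * α n ^ k = 0 := by
  obtain ⟨a, ha⟩ := ContinuousLinearMap.exists_injective_apply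
    (CharacterSpace.toCLM_injective.comp hφ)
  refine ⟨fun n => φ n a, ha, ?_, fun k => ?_⟩
  · refine (spectrum.isBounded a).subset ?_
    rintro - ⟨n, rfl⟩
    exact CharacterSpace.apply_mem_spectrum (φ n) a
  · simpa only [map_pow] using hzero (a ^ k)

/-- If some nonzero absolutely summable linear combination of pairwise distinct characters on
a commutative unital complex Banach algebra vanishes, then there is a bounded sequence of
pairwise distinct complex numbers `α n` with `∑' n, l n * α n ^ k = 0` for all `k ≥ 0`
(with the same coefficients `l n`). -/
theorem exists_bounded_distinct_seq_with_vanishing_moments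
    {A : Type*} [NormedCommRing A] [NormedAlgebra ℂ A] [CompleteSpace A]
    (φ : ℕ → characterSpace ℂ A) (hφ : Function.Injective φ)
    (l : ℕ → ℂ) (hl : Summable fun n => ‖l n‖) (hne : ∃ n, l n ≠ 0)
    (hzero : ∀ a : A, ∑' n, l n * φ n a = 0) :
    ∃ α : ℕ → ℂ, Function.Injective α ∧ Bornology.IsBounded (Set.range α) ∧
      ∀ k : ℕ, ∑' n, l n * α n ^ k = 0 :=
  exists_bounded_distinct_seq_with_vanishing_moments_general φ hφ l hzero
end
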